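/- Suppose X_1, …, X_n are mutually conditionally independent given W (the 'substitutes' information structure). Then I((X_1,…,X_n); W) ≤ Σ_{i=1}^n I(X_i; W), where (X_1,…,X_n) denotes the joint random variable. -/

import Mathlib

open scoped BigOperators

noncomputable section

variable {Ω : Type*} [Fintype Ω]

/-- `μ` is a probability mass function on the finite sample space `Ω`. -/
def IsPmf (μ : Ω → ℝ) : Prop := (∀ ω, 0 ≤ μ ω) ∧ ∑ ω, μ ω = 1

open Classical in
/-- Probability of the event `A` under the pmf `μ`. -/
def pr (μ : Ω → ℝ) (A : Ω → Prop) : ℝ := ∑ ω, if A ω then μ ω else 0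

/-- Conditional probability of `A` given `B` (with the convention `x / 0 = 0`). -/
def cpr (μ : Ω → ℝ) (A B : Ω → Prop) : ℝ := pr μ (fun ω => A ω ∧ B ω) / pr μ B

open Classical in
/-- Mutual information between the random variables `X` and `Y`,
`I(X;Y) = Σ_{x,y} P[X=x,Y=y] log( P[X=x,Y=y] / (P[X=x]·P[Y=y]) )`. -/
def mi (μ : Ω → ℝ) {S T : Type*} (X : Ω → S) (Y : Ω → T) : ℝ :=
  ∑ x ∈ Finset.univ.image X, ∑ y ∈ Finset.univ.image Y,
    pr μ (fun ω => X ω = x ∧ Y ω = y) *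
      Real.log (pr μ (fun ω => X ω = x ∧ Y ω = y) /
        (pr μ (fun ω => X ω = x) * pr μ (fun ω => Y ω = y)))

open Classical in
/-- Mutual information between `X` and `Y` conditioned on the event `B`,
`I(X;Y|B) = Σ_{x,y} P[X=x,Y=y|B] log( P[X=x,Y=y|B] / (P[X=x|B]·P[Y=y|B]) )`. -/
def miOn (μ : Ω → ℝ) {S T : Type*} (X : Ω → S) (Y : Ω → T) (B : Ω → Prop) : ℝ :=
  ∑ x ∈ Finset.univ.image X, ∑ y ∈ Finset.univ.image Y,
    cpr μ (fun ω => X ω = x ∧ Y ω = y) B *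
      Real.log (cpr μ (fun ω => X ω = x ∧ Y ω = y) B /
        (cpr μ (fun ω => X ω = x) B * cpr μ (fun ω => Y ω = y) B))

open Classical in
/-- Conditional mutual information `I(X;Y|Z) = E_Z[ I(X;Y|Z=z) ]`. -/
def cmi (μ : Ω → ℝ) {S T U : Type*} (X : Ω → S) (Y : Ω → T) (Z : Ω → U) : ℝ :=
  ∑ z ∈ Finset.univ.image Z,
    pr μ (fun ω => Z ω = z) * miOn μ X Y (fun ω => Z ω = z)

/-- The family `X i` is mutually independent conditioned on the event `B`. -/
def iIndepOn {n : ℕ} (μ : Ω → ℝ) {S : Type*} (X : Fin n → Ω → S) (B : Ω → Prop) : Prop :=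
  ∀ x : Fin n → S,
    cpr μ (fun ω => ∀ i, X i ω = x i) B = ∏ i, cpr μ (fun ω => X i ω = x i) B

/-- The family `X i` is mutually independent conditioned on `W`
(the "substitutes" information structure when `W` is the event to be predicted). -/
def iCondIndep {n : ℕ} (μ : Ω → ℝ) {S T : Type*} (X : Fin n → Ω → S) (W : Ω → T) : Prop :=
  ∀ w : T, pr μ (fun ω => W ω = w) ≠ 0 → iIndepOn μ X (fun ω => W ω = w)

/-! Write `X = (X i)ᵢ` for the joint signal. Conditional independence given `W` factorises
`P[X = x, W = w] / P[W = w]` as `∏ i, P[X i = x i, W = w] / P[W = w]`, so every `W`-term cancels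
pointwise and `Σ i, I(X i; W) - I(X; W)` is the total correlation
`E[log (P[X = x] / ∏ i, P[X i = x i])]` of the signals. That is a Kullback–Leibler divergence,
nonnegative by `log t ≥ 1 - 1/t` because the product of the marginals has mass at most one on the
range of `X`. -/

open Finset Real

lemma sum_log_div_sub_log_div_eq_of_prod {ι : Type*} [Fintype ι] {w j jw : ℝ} {x xw : ι → ℝ}
    (hw : w ≠ 0) (hj : j ≠ 0) (hjw : jw ≠ 0) (hx : ∀ i, x i ≠ 0) (hxw : ∀ i, xw i ≠ 0)
    (hprod : jw / w = ∏ i, xw i / w) :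
    ∑ i, log (xw i / (x i * w)) - log (jw / (j * w)) = log (j / ∏ i, x i) := by
  rw [← log_prod fun i _ => div_ne_zero (hxw i) (mul_ne_zero (hx i) hw),
    ← log_div (prod_ne_zero_iff.mpr fun i _ => div_ne_zero (hxw i) (mul_ne_zero (hx i) hw))
      (div_ne_zero hjw (mul_ne_zero hj hw))]
  congr 1
  simp_rw [div_mul_eq_div_div_swap]
  rw [prod_div_distrib, ← hprod]
  field_simp

section Probability

variable (μ : Ω → ℝ)

lemma pr_nonneg (hμ : ∀ ω, 0 ≤ μ ω) (A : Ω → Prop) : 0 ≤ pr μ A :=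
  sum_nonneg fun ω _ => by split_ifs <;> simp [hμ ω]

lemma le_pr (hμ : ∀ ω, 0 ≤ μ ω) {A : Ω → Prop} {ω : Ω} (hA : A ω) : μ ω ≤ pr μ A := by
  classical
  simpa [pr, hA] using
    single_le_sum (f := fun ω => if A ω then μ ω else 0)
      (fun ω _ => by split_ifs <;> simp [hμ ω]) (mem_univ ω)

lemma sum_image_pr_mul {S : Type*} [DecidableEq S] (X : Ω → S) (f : S → ℝ) :
    ∑ x ∈ univ.image X, pr μ (fun ω => X ω = x) * f x = ∑ ω, μ ω * f (X ω) := by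
  simp only [pr, sum_mul, ite_mul, zero_mul]
  rw [sum_comm]
  refine sum_congr rfl fun ω _ => ?_
  rw [sum_ite_eq]
  simp

lemma sum_image_sum_image_pr_mul {S T : Type*} [DecidableEq S] [DecidableEq T]
    (X : Ω → S) (Y : Ω → T) (f : S → T → ℝ) :
    ∑ x ∈ univ.image X, ∑ y ∈ univ.image Y, pr μ (fun ω => X ω = x ∧ Y ω = y) * f x y
      = ∑ ω, μ ω * f (X ω) (Y ω) := by
  simp only [pr, sum_mul, ite_mul, zero_mul, ite_and]
  simp_rw [sum_comm (s := univ.image Y) (t := univ)]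
  rw [sum_comm]
  refine sum_congr rfl fun ω _ => ?_
  simp [sum_ite_eq]

lemma sum_image_pr_eq_one (hμ : IsPmf μ) {S : Type*} [DecidableEq S] (X : Ω → S) :
    ∑ x ∈ univ.image X, pr μ (fun ω => X ω = x) = 1 := by
  simpa [hμ.2] using sum_image_pr_mul μ X 1

open Classical in
lemma mi_eq_sum_mul_log {S T : Type*} (X : Ω → S) (Y : Ω → T) :
    mi μ X Y = ∑ ω, μ ω * log (pr μ (fun ω' => X ω' = X ω ∧ Y ω' = Y ω) /
      (pr μ (fun ω' => X ω' = X ω) * pr μ (fun ω' => Y ω' = Y ω))) :=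
  sum_image_sum_image_pr_mul μ X Y _

def totalCorrelation {ι S : Type*} [Fintype ι] (X : ι → Ω → S) : ℝ :=
  ∑ ω, μ ω * log (pr μ (fun ω' => (fun i => X i ω') = fun i => X i ω) /
    ∏ i, pr μ (fun ω' => X i ω' = X i ω))

lemma sum_image_prod_pr_le_one (hμ : IsPmf μ) {ι S : Type*} [Fintype ι] [DecidableEq ι]
    [DecidableEq S] (X : ι → Ω → S) :
    ∑ x ∈ univ.image (fun ω i => X i ω), ∏ i, pr μ (fun ω => X i ω = x i) ≤ 1 :=
  calc ∑ x ∈ univ.image (fun ω i => X i ω), ∏ i, pr μ (fun ω => X i ω = x i)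
      ≤ ∑ x ∈ Fintype.piFinset fun i => univ.image (X i), ∏ i, pr μ (fun ω => X i ω = x i) := by
        refine sum_le_sum_of_subset_of_nonneg ?_ fun x _ _ =>
          prod_nonneg fun i _ => pr_nonneg μ hμ.1 _
        intro x hx
        obtain ⟨ω, -, rfl⟩ := mem_image.mp hx
        exact Fintype.mem_piFinset.mpr fun i => mem_image_of_mem (X i) (mem_univ ω)
    _ = ∏ i, ∑ y ∈ univ.image (X i), pr μ (fun ω => X i ω = y) :=
        (prod_univ_sum (fun i => univ.image (X i)) fun i y => pr μ (fun ω => X i ω = y)).symm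
    _ = 1 := by simp [sum_image_pr_eq_one μ hμ]

lemma totalCorrelation_nonneg (hμ : IsPmf μ) {ι S : Type*} [Fintype ι] (X : ι → Ω → S) :
    0 ≤ totalCorrelation μ X := by
  classical
  set J : Ω → ι → S := fun ω i => X i ω
  set q : (ι → S) → ℝ := fun x => ∏ i, pr μ (fun ω => X i ω = x i)
  have hpoint : ∀ ω, μ ω - μ ω * (q (J ω) / pr μ (fun ω' => J ω' = J ω))
      ≤ μ ω * log (pr μ (fun ω' => J ω' = J ω) / q (J ω)) := by
    intro ω
    rcases (hμ.1 ω).eq_or_lt with h0 | hpos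
    · simp [← h0]
    have hJ : 0 < pr μ (fun ω' => J ω' = J ω) := hpos.trans_le (le_pr μ hμ.1 rfl)
    have hq : 0 < q (J ω) := prod_pos fun i _ => hpos.trans_le (le_pr μ hμ.1 rfl)
    have hlog := one_sub_inv_le_log_of_pos (div_pos hJ hq)
    rw [inv_div] at hlog
    linarith [mul_le_mul_of_nonneg_left hlog hpos.le]
  have hsum : ∑ ω, μ ω * (q (J ω) / pr μ (fun ω' => J ω' = J ω)) ≤ 1 :=
    calc ∑ ω, μ ω * (q (J ω) / pr μ (fun ω' => J ω' = J ω))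
        = ∑ x ∈ univ.image J, pr μ (fun ω => J ω = x) * (q x / pr μ (fun ω => J ω = x)) :=
          (sum_image_pr_mul μ J fun x => q x / pr μ (fun ω => J ω = x)).symm
      _ ≤ ∑ x ∈ univ.image J, q x :=
          sum_le_sum fun x _ => by
            rcases (pr_nonneg μ hμ.1 fun ω => J ω = x).eq_or_lt with h0 | hpos
            · rw [← h0, zero_mul]
              exact prod_nonneg fun i _ => pr_nonneg μ hμ.1 _
            · rw [mul_div_cancel₀ _ hpos.ne']
      _ ≤ 1 := sum_image_prod_pr_le_one μ hμ X
  have := sum_le_sum fun ω (_ : ω ∈ univ) => hpoint ω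
  rw [sum_sub_distrib, hμ.2] at this
  unfold totalCorrelation
  linarith

lemma sum_mi_sub_mi_eq_totalCorrelation (hμ : ∀ ω, 0 ≤ μ ω) {n : ℕ} {S T : Type*}
    (X : Fin n → Ω → S) (W : Ω → T) (h : iCondIndep μ X W) :
    ∑ i, mi μ (X i) W - mi μ (fun ω i => X i ω) W = totalCorrelation μ X := by
  simp only [mi_eq_sum_mul_log, totalCorrelation]
  rw [sum_comm, ← sum_sub_distrib]
  refine sum_congr rfl fun ω _ => ?_
  rcases (hμ ω).eq_or_lt with h0 | hpos
  · simp [← h0]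
  have hpr {A : Ω → Prop} (hA : A ω) : pr μ A ≠ 0 := (hpos.trans_le (le_pr μ hμ hA)).ne'
  rw [← mul_sum, ← mul_sub]
  congr 1
  refine sum_log_div_sub_log_div_eq_of_prod (hpr rfl) (hpr rfl) (hpr ⟨rfl, rfl⟩)
    (fun _ => hpr rfl) (fun _ => hpr ⟨rfl, rfl⟩) ?_
  simpa [iIndepOn, cpr, funext_iff] using h (W ω) (hpr rfl) fun i => X i ω

end Probability

/-- If `X 1, …, X n` are mutually conditionally independent given `W`
(the "substitutes" structure), then
`I((X 1,…,X n); W) ≤ Σ_i I(X i; W)`. -/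
theorem mi_joint_le_sum_of_substitutes
    {n : ℕ} {S T : Type*} (μ : Ω → ℝ) (hμ : IsPmf μ)
    (X : Fin n → Ω → S) (W : Ω → T) (h : iCondIndep μ X W) :
    mi μ (fun ω => fun i => X i ω) W ≤ ∑ i, mi μ (X i) W := by
  linarith [sum_mi_sub_mi_eq_totalCorrelation μ hμ.1 X W h, totalCorrelation_nonneg μ hμ X]
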